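/- Let $k \geq 1$, let $d_1, \dots, d_k$ be metrics on $V$ with $|V| = n$, and let $q < n$. Suppose $F \subseteq \binom{V}{2}$ with $|F| \geq q$ is a union of edge sets of pairwise vertex-disjoint paths $P_1, \dots, P_r$. For each $i$, let $T_i'$ be a minimum-weight (with respect to $d_i$) spanning tree among all spanning trees containing $F$. Then the tours $C_1, \dots, C_k$ obtained by doubling each $T_i'$, taking an Eulerian circuit preserving $P_1, \dots, P_r$ as subpaths, and shortcutting while preserving these subpaths, satisfy $\left|\bigcap_{i=1}^k E(C_i)\right| \geq q$ and $\sum_{i=1}^k d_i(C_i) \leq 2 \sum_{i=1}^k d_i(T_i')$. -/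

import Mathlib

open Finset

variable {V : Type*} [Fintype V] [DecidableEq V]

/-- symmetrized edge cost of a (possibly asymmetric) weight function -/
noncomputable def ecost (d : V → V → ℝ) : Sym2 V → ℝ :=
  Sym2.lift ⟨fun x y => (d x y + d y x) / 2, fun x y => by ring⟩

/-- total cost of an edge set -/
noncomputable def cost (d : V → V → ℝ) (F : Finset (Sym2 V)) : ℝ :=
  ∑ e ∈ F, ecost d e

/-- edges of a cyclic tour given by a vertex list -/
def cycleEdges (l : List V) : Finset (Sym2 V) :=
  ((l.zip (l.rotate 1)).map fun p => s(p.1, p.2)).toFinset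

/-- edges of a path given by a vertex list -/
def pathEdges (l : List V) : Finset (Sym2 V) :=
  (l.zipWith (fun a b => s(a, b)) l.tail).toFinset

def IsHamCycle (l : List V) : Prop := l.Nodup ∧ ∀ v : V, v ∈ l

def IsHamPath (l : List V) : Prop := l.Nodup ∧ ∀ v : V, v ∈ l

def IsMetric (d : V → V → ℝ) : Prop :=
  (∀ x y, 0 ≤ d x y) ∧ (∀ x, d x x = 0) ∧ (∀ x y, d x y = d y x) ∧
    ∀ x y z, d x z ≤ d x y + d y z

def IsSpanningTree (E : Finset (Sym2 V)) : Prop :=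
  (SimpleGraph.fromEdgeSet (E : Set (Sym2 V))).IsTree

/-- edge multiset of a walk given by its vertex list -/
def walkEdges (l : List V) : Multiset (Sym2 V) :=
  (l.zipWith (fun a b => s(a, b)) l.tail : List (Sym2 V))

/-- cost of a walk, edges counted with multiplicity -/
noncomputable def walkCost (d : V → V → ℝ) (l : List V) : ℝ :=
  ((walkEdges l).map (ecost d)).sum

def IsClosedWalk (l : List V) : Prop := l ≠ [] ∧ l.head? = l.getLast?

/-- vertices touched by an edge set -/
def edgeVerts (F : Finset (Sym2 V)) : Finset V :=
  Finset.univ.filter fun v => ∃ e ∈ F, v ∈ e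

set_option linter.unusedSectionVars false

section lemmas
variable {d : V → V → ℝ}

lemma ecost_mk (d : V → V → ℝ) (x y : V) : ecost d s(x, y) = (d x y + d y x) / 2 := by
  simp [ecost]

lemma ecost_nonneg (hd : IsMetric d) (e : Sym2 V) : 0 ≤ ecost d e := by
  induction e using Sym2.ind with
  | _ x y => rw [ecost_mk]; have := hd.1 x y; have := hd.1 y x; linarith

lemma ecost_diag (hd : IsMetric d) (x : V) : ecost d s(x, x) = 0 := by
  rw [ecost_mk]; rw [hd.2.1 x]; ring

lemma ecost_triangle (hd : IsMetric d) (x y z : V) :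
    ecost d s(x, z) ≤ ecost d s(x, y) + ecost d s(y, z) := by
  rw [ecost_mk, ecost_mk, ecost_mk]
  have h1 := hd.2.2.2 x y z
  have h2 := hd.2.2.2 z y x
  linarith

lemma walkEdges_nil : walkEdges ([] : List V) = 0 := rfl
lemma walkEdges_single (x : V) : walkEdges [x] = 0 := rfl
lemma walkEdges_cons2 (a b : V) (t : List V) :
    walkEdges (a :: b :: t) = s(a, b) ::ₘ walkEdges (b :: t) := rfl

lemma walkEdges_append (l1 : List V) (x : V) (l2 : List V) :
    walkEdges (l1 ++ x :: l2) = walkEdges (l1 ++ [x]) + walkEdges (x :: l2) := by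
  induction l1 with
  | nil => simp [walkEdges_single, walkEdges]
  | cons c l1' ih =>
    cases l1' with
    | nil => simp [walkEdges_cons2, walkEdges_single]
    | cons dd l1'' =>
      have h1 : (c :: dd :: l1'') ++ x :: l2 = c :: dd :: (l1'' ++ x :: l2) := by simp
      have h2 : (c :: dd :: l1'') ++ [x] = c :: dd :: (l1'' ++ [x]) := by simp
      rw [h1, h2, walkEdges_cons2, walkEdges_cons2]
      have h3 := ih
      simp only [List.cons_append] at h3
      rw [h3, Multiset.cons_add]

end lemmas

section lemmas2
variable {d : V → V → ℝ}

lemma walkEdges_concat (p : List V) (hp : p ≠ []) (x : V) :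
    walkEdges (p ++ [x]) = s(p.getLast hp, x) ::ₘ walkEdges p := by
  induction p with
  | nil => exact absurd rfl hp
  | cons c p' ih =>
    cases p' with
    | nil => simp [walkEdges_cons2, walkEdges_single, walkEdges_nil]
    | cons dd p'' =>
      have h1 : (c :: dd :: p'') ++ [x] = c :: ((dd :: p'') ++ [x]) := by simp
      rw [h1]
      have h2 : (dd :: p'') ++ [x] = dd :: (p'' ++ [x]) := by simp
      rw [h2]
      rw [walkEdges_cons2, walkEdges_cons2]
      have h3 := ih (by simp)
      rw [h2] at h3
      rw [h3]
      rw [Multiset.cons_swap]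
      simp [List.getLast_cons]

lemma cycleEdges_eq (a : V) (zs : List V) :
    cycleEdges (a :: zs) = (walkEdges (a :: zs ++ [a])).toFinset := by
  unfold cycleEdges walkEdges
  rw [List.toFinset_coe]
  congr 1
  have hrot : (a :: zs).rotate 1 = zs ++ [a] := by
    rw [List.rotate_cons_succ, List.rotate_zero]
  rw [hrot]
  have h1 : (a :: zs).zip (zs ++ [a]) = List.zipWith Prod.mk (a :: zs) (zs ++ [a]) := rfl
  rw [h1, List.map_zipWith]
  have h2 : (a :: zs ++ [a]) = (a :: zs) ++ [a] := by simp
  have h3 : (a :: zs ++ [a]).tail = zs ++ [a] := by simp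
  rw [h3]
  have h4 : List.zipWith (fun a b => s(a, b)) (a :: zs ++ [a]) (zs ++ [a])
      = List.zipWith (fun a b => s(a, b)) ((a :: zs) ++ [a]) ((zs ++ [a]) ++ []) := by simp
  rw [h4, List.zipWith_append (by simp)]
  simp

lemma toFinset_sum_le (m : Multiset (Sym2 V)) (f : Sym2 V → ℝ) (hf : ∀ e, 0 ≤ f e) :
    ∑ e ∈ m.toFinset, f e ≤ (m.map f).sum := by
  have h1 : ∑ e ∈ m.toFinset, f e = (m.dedup.map f).sum := by
    rfl
  obtain ⟨w, hw⟩ := Multiset.le_iff_exists_add.mp (Multiset.dedup_le m)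
  have key : (Multiset.map f m).sum = (Multiset.map f m.dedup).sum + (Multiset.map f w).sum := by
    conv_lhs => rw [hw]
    rw [Multiset.map_add, Multiset.sum_add]
  have hnn : 0 ≤ (Multiset.map f w).sum := by
    apply Multiset.sum_nonneg
    intro x hx
    obtain ⟨y, _, rfl⟩ := Multiset.mem_map.mp hx
    exact hf y
  rw [h1, key]
  linarith

lemma pack_cost (hd : IsMetric d) (x y v : V) (R : Multiset (Sym2 V)) (e : Sym2 V)
    (he : e = s(x, v) ∨ e = s(v, y)) :
    ((s(x, v) ::ₘ s(v, y) ::ₘ R).map (ecost d)).sum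
      ≤ ((s(x, y) ::ₘ R).map (ecost d)).sum + 2 * ecost d e := by
  rw [Multiset.map_cons, Multiset.map_cons, Multiset.map_cons,
    Multiset.sum_cons, Multiset.sum_cons, Multiset.sum_cons]
  rcases he with rfl | rfl
  · have := ecost_triangle hd v x y
    have hsymm : ecost d s(v, x) = ecost d s(x, v) := by rw [Sym2.eq_swap]
    linarith
  · have := ecost_triangle hd x y v
    have hsymm : ecost d s(y, v) = ecost d s(v, y) := by rw [Sym2.eq_swap]
    linarith

lemma pack_mem (x y v : V) (R : Multiset (Sym2 V)) (F' : Finset (Sym2 V))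
    (hcond : s(x, y) ∉ F' ∨ s(x, y) ∈ R) :
    ∀ f ∈ F', f ∈ (s(x, y) ::ₘ R).toFinset → f ∈ (s(x, v) ::ₘ s(v, y) ::ₘ R).toFinset := by
  intro f hf hmem
  rw [Multiset.mem_toFinset] at hmem ⊢
  rw [Multiset.mem_cons] at hmem
  rcases hmem with rfl | hR
  · rcases hcond with h | h
    · exact absurd hf h
    · simp [Multiset.mem_cons, h]
  · simp [Multiset.mem_cons, hR]

lemma perm_pack {M L : List V} {v : V} (hperm : M.Perm (v :: L)) (hv : v ∉ L)
    (hnd : L.Nodup) : M.Nodup ∧ M.toFinset = insert v L.toFinset := by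
  constructor
  · exact hperm.nodup_iff.mpr (List.nodup_cons.mpr ⟨hv, hnd⟩)
  · rw [List.toFinset_eq_of_perm _ _ hperm]
    simp

end lemmas2

section graph

def edeg (A : Finset (Sym2 V)) (x : V) : ℕ := (A.filter (fun e => x ∈ e)).card

lemma edeg_mono {A B : Finset (Sym2 V)} (h : A ⊆ B) (x : V) : edeg A x ≤ edeg B x :=
  Finset.card_le_card (Finset.filter_subset_filter _ h)

lemma edeg_pos_iff {A : Finset (Sym2 V)} {x : V} : 0 < edeg A x ↔ ∃ e ∈ A, x ∈ e := by
  unfold edeg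
  rw [Finset.card_pos]
  constructor
  · rintro ⟨e, he⟩
    rw [Finset.mem_filter] at he
    exact ⟨e, he.1, he.2⟩
  · rintro ⟨e, he, hx⟩
    exact ⟨e, Finset.mem_filter.mpr ⟨he, hx⟩⟩

lemma edeg_unique {A : Finset (Sym2 V)} {x : V} (h : edeg A x ≤ 1) :
    ∀ f ∈ A, ∀ f' ∈ A, x ∈ f → x ∈ f' → f = f' := by
  intro f hf f' hf' hx hx'
  exact Finset.card_le_one.mp h f (Finset.mem_filter.mpr ⟨hf, hx⟩) f'
    (Finset.mem_filter.mpr ⟨hf', hx'⟩)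

lemma handshake {S : Finset V} {T : Finset (Sym2 V)}
    (hnd : ∀ e ∈ T, ¬ e.IsDiag) (hsub : ∀ e ∈ T, ∀ x ∈ e, x ∈ S) :
    ∑ x ∈ S, edeg T x = 2 * T.card := by
  have key : ∀ e ∈ T, (∑ x ∈ S, if x ∈ e then 1 else 0) = 2 := by
    intro e he
    induction e using Sym2.ind with
    | _ a b =>
      have hab : a ≠ b := by
        intro h; exact hnd _ he (by rw [h]; exact Sym2.mk_isDiag_iff.mpr rfl)
      rw [← Finset.card_filter]
      have heq : S.filter (fun x => x ∈ s(a,b)) = {a, b} := by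
        ext x
        simp only [Finset.mem_filter, Sym2.mem_iff, Finset.mem_insert, Finset.mem_singleton]
        constructor
        · rintro ⟨_, h⟩; exact h
        · rintro (rfl | rfl)
          · exact ⟨hsub _ he x (by simp), Or.inl rfl⟩
          · exact ⟨hsub _ he x (by simp), Or.inr rfl⟩
      rw [heq]
      rw [Finset.card_insert_of_notMem (by simp [hab]), Finset.card_singleton]
  calc ∑ x ∈ S, edeg T x = ∑ x ∈ S, ∑ e ∈ T, if x ∈ e then 1 else 0 :=
        Finset.sum_congr rfl (by intro x _; exact Finset.card_filter _ _)
    _ = ∑ e ∈ T, ∑ x ∈ S, if x ∈ e then 1 else 0 := Finset.sum_comm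
    _ = ∑ _e ∈ T, 2 := Finset.sum_congr rfl key
    _ = 2 * T.card := by rw [Finset.sum_const, smul_eq_mul, mul_comm]

lemma min_deg_one {S : Finset V} {T : Finset (Sym2 V)}
    (hconn : ∀ x ∈ S, ∀ y ∈ S, (SimpleGraph.fromEdgeSet (T : Set (Sym2 V))).Reachable x y)
    (hS2 : 2 ≤ S.card) : ∀ x ∈ S, 1 ≤ edeg T x := by
  intro x hx
  obtain ⟨y, hy, hyx⟩ := Finset.exists_mem_ne (s := S) (by omega) x
  obtain ⟨W⟩ := hconn x hx y hy
  cases W with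
  | nil => exact absurd rfl hyx.symm
  | @cons _ z _ h W' =>
    have : s(x, z) ∈ T := by
      have := (SimpleGraph.fromEdgeSet_adj _).mp h
      exact Finset.mem_coe.mp this.1
    exact edeg_pos_iff.mpr ⟨_, this, by simp⟩

lemma exists_leaf {S : Finset V} {T : Finset (Sym2 V)}
    (hnd : ∀ e ∈ T, ¬ e.IsDiag) (hsub : ∀ e ∈ T, ∀ x ∈ e, x ∈ S)
    (hcard : T.card < S.card)
    (hconn : ∀ x ∈ S, ∀ y ∈ S, (SimpleGraph.fromEdgeSet (T : Set (Sym2 V))).Reachable x y)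
    (hS2 : 2 ≤ S.card) : ∃ v ∈ S, edeg T v = 1 := by
  by_contra h
  push_neg at h
  have h2 : ∀ x ∈ S, 2 ≤ edeg T x := by
    intro x hx
    have h1 := min_deg_one hconn hS2 x hx
    have := h x hx
    omega
  have := Finset.sum_le_sum h2
  rw [handshake hnd hsub] at this
  simp only [Finset.sum_const, smul_eq_mul] at this
  omega

end graph

section erb

lemma reach_avoid (T : Finset (Sym2 V)) (B : Finset V)
    (hB : ∀ b ∈ B, ∀ f ∈ T, ∀ f' ∈ T, b ∈ f → b ∈ f' → f = f') :
    ∀ (n : ℕ) (x y : V), x ∉ B → y ∉ B →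
      ∀ (W : (SimpleGraph.fromEdgeSet (T : Set (Sym2 V))).Walk x y), W.length ≤ n →
      (SimpleGraph.fromEdgeSet ((T.filter (fun f => ∀ b ∈ B, ¬ b ∈ f)) : Set (Sym2 V))).Reachable x y := by
  intro n
  induction n with
  | zero =>
    intro x y hx hy W hW
    cases W with
    | nil => exact SimpleGraph.Reachable.refl _
    | cons h W' => simp [SimpleGraph.Walk.length_cons] at hW
  | succ n ih =>
    intro x y hx hy W hW
    cases W with
    | nil => exact SimpleGraph.Reachable.refl _
    | @cons _ z _ h W' =>
      have hxzT : s(x, z) ∈ T := Finset.mem_coe.mp ((SimpleGraph.fromEdgeSet_adj _).mp h).1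
      have hxz : x ≠ z := ((SimpleGraph.fromEdgeSet_adj _).mp h).2
      by_cases hzB : z ∈ B
      · -- z is a removed leaf; the walk must immediately come back to x
        cases W' with
        | nil => exact absurd hzB hy
        | @cons _ w _ h2 W'' =>
          have hzwT : s(z, w) ∈ T := Finset.mem_coe.mp ((SimpleGraph.fromEdgeSet_adj _).mp h2).1
          have heq : s(x, z) = s(z, w) :=
            hB z hzB _ hxzT _ hzwT (by simp) (by simp)
          have hwx : w = x := by
            rw [Sym2.eq_iff] at heq
            rcases heq with ⟨h1, h2'⟩ | ⟨h1, h2'⟩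
            · exact absurd h1 hxz
            · exact h1.symm
          subst hwx
          apply ih _ y hx hy W''
          rw [SimpleGraph.Walk.length_cons, SimpleGraph.Walk.length_cons] at hW
          omega
      · have hreach := ih z y hzB hy W' (by rw [SimpleGraph.Walk.length_cons] at hW; omega)
        have hadj : (SimpleGraph.fromEdgeSet ((T.filter (fun f => ∀ b ∈ B, ¬ b ∈ f)) : Set (Sym2 V))).Adj x z := by
          rw [SimpleGraph.fromEdgeSet_adj]
          refine ⟨Finset.mem_coe.mpr (Finset.mem_filter.mpr ⟨hxzT, ?_⟩), hxz⟩
          intro b hb hbmem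
          rw [Sym2.mem_iff] at hbmem
          rcases hbmem with rfl | rfl
          · exact hx hb
          · exact hzB hb
        exact hadj.reachable.trans hreach

end erb

section goodleaf

lemma sym2_eq_of_two_mem {f : Sym2 V} {a b : V} (ha : a ∈ f) (hb : b ∈ f) (hab : a ≠ b) :
    f = s(a, b) := by
  induction f using Sym2.ind with
  | _ x y =>
    rw [Sym2.mem_iff] at ha hb
    rcases ha with rfl | rfl <;> rcases hb with rfl | rfl
    · exact absurd rfl hab
    · rfl
    · exact Sym2.eq_swap
    · exact absurd rfl hab

lemma leaf_edge {T : Finset (Sym2 V)} (hnd : ∀ e ∈ T, ¬ e.IsDiag) {v : V} (h : edeg T v = 1) :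
    ∃ u, u ≠ v ∧ s(u, v) ∈ T ∧ ∀ f ∈ T, v ∈ f → f = s(u, v) := by
  obtain ⟨e, he, hv⟩ := edeg_pos_iff.mp (show 0 < edeg T v by rw [h]; norm_num)
  refine ⟨Sym2.Mem.other hv, ?_, ?_, ?_⟩
  · intro heq
    apply hnd e he
    rw [← Sym2.other_spec hv, heq]
    exact Sym2.mk_isDiag_iff.mpr rfl
  · rw [Sym2.eq_swap, Sym2.other_spec hv]; exact he
  · intro f hf hvf
    have hfe := edeg_unique (le_of_eq h) f hf e he hvf hv
    exact hfe.trans ((Sym2.other_spec hv).symm.trans Sym2.eq_swap)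

lemma good_leaf {S : Finset V} {T F : Finset (Sym2 V)}
    (hnd : ∀ e ∈ T, ¬ e.IsDiag) (hsub : ∀ e ∈ T, ∀ x ∈ e, x ∈ S)
    (hcard : T.card + 1 = S.card)
    (hconn : ∀ x ∈ S, ∀ y ∈ S, (SimpleGraph.fromEdgeSet (T : Set (Sym2 V))).Reachable x y)
    (hS2 : 2 ≤ S.card) (hFT : F ⊆ T) (hF2 : ∀ x, edeg F x ≤ 2) :
    ∃ u v : V, u ≠ v ∧ s(u, v) ∈ T ∧ edeg T v = 1 ∧ (s(u, v) ∈ F ∨ edeg F u ≤ 1) := by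
  classical
  by_contra hcon
  push_neg at hcon
  -- every leaf is "bad"
  set B : Finset V := S.filter (fun v => edeg T v = 1) with hBdef
  have hBleaf : ∀ b ∈ B, edeg T b = 1 := by
    intro b hb; exact (Finset.mem_filter.mp hb).2
  have fact1 : ∀ b ∈ B, ∀ f ∈ T, b ∈ f → f ∉ F ∧ ∀ u ∈ f, u ≠ b → 2 ≤ edeg F u := by
    intro b hb f hf hbf
    obtain ⟨u, hub, huT, huniq⟩ := leaf_edge hnd (hBleaf b hb)
    have hfe : f = s(u, b) := huniq f hf hbf
    subst hfe
    have := hcon u b hub huT (hBleaf b hb)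
    constructor
    · exact this.1
    · intro u' hu' hu'b
      rw [Sym2.mem_iff] at hu'
      rcases hu' with rfl | rfl
      · exact this.2
      · exact absurd rfl hu'b
  have fact2 : ∀ b ∈ B, edeg F b = 0 := by
    intro b hb
    unfold edeg
    rw [Finset.card_eq_zero, Finset.filter_eq_empty_iff]
    intro f hfF hbf
    exact (fact1 b hb f (hFT hfF) hbf).1 hfF
  obtain ⟨v0, hv0S, hv0⟩ := exists_leaf hnd hsub (by omega) hconn hS2
  have hv0B : v0 ∈ B := Finset.mem_filter.mpr ⟨hv0S, hv0⟩
  set T2 : Finset (Sym2 V) := T.filter (fun f => ∀ b ∈ B, ¬ b ∈ f) with hT2def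
  set S2 : Finset V := S \ B with hS2def
  have fact3 : ∀ f ∈ F, f ∈ T2 := by
    intro f hf
    refine Finset.mem_filter.mpr ⟨hFT hf, ?_⟩
    intro b hb hbf
    exact (fact1 b hb f (hFT hf) hbf).1 hf
  -- injection from B into T \ T2
  have hch : ∀ b ∈ B, ∃ e, e ∈ T ∧ b ∈ e := by
    intro b hb
    obtain ⟨e, he, hbe⟩ := edeg_pos_iff.mp (by rw [hBleaf b hb]; omega)
    exact ⟨e, he, hbe⟩
  set g : V → Sym2 V := fun b => if h : ∃ e, e ∈ T ∧ b ∈ e then h.choose else s(b, b) with hgdef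
  have hgspec : ∀ b ∈ B, g b ∈ T ∧ b ∈ g b := by
    intro b hb
    have h := hch b hb
    simp only [hgdef, dif_pos h]
    exact h.choose_spec
  have hinj : B.card ≤ (T \ T2).card := by
    apply Finset.card_le_card_of_injOn g
    · intro b hb
      obtain ⟨hgT, hbg⟩ := hgspec b hb
      refine Finset.mem_sdiff.mpr ⟨hgT, ?_⟩
      intro hmem
      exact (Finset.mem_filter.mp hmem).2 b hb hbg
    · intro b hb b' hb' heq
      rw [Finset.mem_coe] at hb hb'
      by_contra hne
      obtain ⟨hgT, hbg⟩ := hgspec b hb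
      obtain ⟨_, hb'g⟩ := hgspec b' hb'
      rw [← heq] at hb'g
      have hfe : g b = s(b, b') := sym2_eq_of_two_mem hbg hb'g hne
      have h2 := (fact1 b hb (g b) hgT hbg).2 b' (by rw [hfe]; simp) (Ne.symm hne)
      rw [fact2 b' hb'] at h2
      omega
  have hT2sub : T2 ⊆ T := Finset.filter_subset _ _
  have hcard2 : (T \ T2).card = T.card - T2.card := Finset.card_sdiff_of_subset hT2sub
  have hT2le : T2.card ≤ T.card := Finset.card_le_card hT2sub
  have hBsubS : B ⊆ S := Finset.filter_subset _ _
  have hS2card : S2.card = S.card - B.card := Finset.card_sdiff_of_subset hBsubS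
  have hBleS : B.card ≤ S.card := Finset.card_le_card hBsubS
  have hTcard : T2.card < S2.card := by omega
  have hnd2 : ∀ e ∈ T2, ¬ e.IsDiag := fun e he => hnd e (hT2sub he)
  have hsub2 : ∀ e ∈ T2, ∀ x ∈ e, x ∈ S2 := by
    intro e he x hx
    refine Finset.mem_sdiff.mpr ⟨hsub e (hT2sub he) x hx, ?_⟩
    intro hxB
    exact (Finset.mem_filter.mp he).2 x hxB hx
  have hBuniq : ∀ b ∈ B, ∀ f ∈ T, ∀ f' ∈ T, b ∈ f → b ∈ f' → f = f' := by
    intro b hb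
    exact edeg_unique (le_of_eq (hBleaf b hb))
  have hconn2 : ∀ x ∈ S2, ∀ y ∈ S2,
      (SimpleGraph.fromEdgeSet (T2 : Set (Sym2 V))).Reachable x y := by
    intro x hx y hy
    rw [Finset.mem_sdiff] at hx hy
    obtain ⟨W⟩ := hconn x hx.1 y hy.1
    exact reach_avoid T B hBuniq W.length x y hx.2 hy.2 W le_rfl
  -- S2 has at least 2 elements
  obtain ⟨u0, hu0v0, hu0T, _⟩ := leaf_edge hnd hv0
  have hu0deg : 2 ≤ edeg F u0 := by
    have := (fact1 v0 hv0B s(u0, v0) hu0T (by simp)).2 u0 (by simp) hu0v0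
    exact this
  have hu0S : u0 ∈ S := hsub _ hu0T u0 (by simp)
  have hu0B : u0 ∉ B := by
    intro hmem
    have := fact2 u0 hmem
    omega
  have hu0S2 : u0 ∈ S2 := Finset.mem_sdiff.mpr ⟨hu0S, hu0B⟩
  have hT2ne : T2.Nonempty := by
    obtain ⟨f, hf, hu0f⟩ := edeg_pos_iff.mp (show 0 < edeg F u0 by omega)
    exact ⟨f, fact3 f hf⟩
  have hS2ge2 : 2 ≤ S2.card := by
    have h1 : 1 ≤ S2.card := Finset.card_pos.mpr ⟨u0, hu0S2⟩
    have h2 : 1 ≤ T2.card := Finset.card_pos.mpr hT2ne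
    omega
  obtain ⟨y, hyS2, hy1⟩ := exists_leaf hnd2 hsub2 hTcard hconn2 hS2ge2
  have hyS : y ∈ S := (Finset.mem_sdiff.mp hyS2).1
  have hyB : y ∉ B := (Finset.mem_sdiff.mp hyS2).2
  by_cases hEq : T.filter (fun e => y ∈ e) ⊆ T2.filter (fun e => y ∈ e)
  · have h1 : edeg T y ≤ edeg T2 y := Finset.card_le_card hEq
    have h2 : 1 ≤ edeg T y := min_deg_one hconn hS2 y hyS
    have h3 : edeg T y = 1 := by rw [hy1] at h1; omega
    exact hyB (Finset.mem_filter.mpr ⟨hyS, h3⟩)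
  · obtain ⟨f, hf1, hf2⟩ := Finset.not_subset.mp hEq
    rw [Finset.mem_filter] at hf1
    have hfT2 : f ∉ T2 := by
      intro hmem
      exact hf2 (Finset.mem_filter.mpr ⟨hmem, hf1.2⟩)
    have hftouch : ∃ b ∈ B, b ∈ f := by
      by_contra hno
      push_neg at hno
      exact hfT2 (Finset.mem_filter.mpr ⟨hf1.1, hno⟩)
    obtain ⟨b, hbB, hbf⟩ := hftouch
    have hby : b ≠ y := fun h => hyB (h ▸ hbB)
    have h2y : 2 ≤ edeg F y :=
      (fact1 b hbB f hf1.1 hbf).2 y hf1.2 hby.symm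
    have hFy : F.filter (fun e => y ∈ e) ⊆ T2.filter (fun e => y ∈ e) := by
      intro f' hf'
      rw [Finset.mem_filter] at hf' ⊢
      exact ⟨fact3 f' hf'.1, hf'.2⟩
    have := Finset.card_le_card hFy
    unfold edeg at h2y hy1
    omega

end goodleaf

section pathstruct

def edgesOf (l : List V) : List (Sym2 V) := l.zipWith (fun a b => s(a, b)) l.tail

lemma edgesOf_nil : edgesOf ([] : List V) = [] := rfl
lemma edgesOf_single (x : V) : edgesOf [x] = [] := rfl
lemma edgesOf_cons2 (a b : V) (t : List V) :
    edgesOf (a :: b :: t) = s(a, b) :: edgesOf (b :: t) := rfl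

lemma edgesOf_mem : ∀ (l : List V) (e : Sym2 V), e ∈ edgesOf l → ∀ x ∈ e, x ∈ l := by
  intro l
  induction l with
  | nil => intro e he; simp [edgesOf_nil] at he
  | cons a t ih =>
    cases t with
    | nil => intro e he; simp [edgesOf_single] at he
    | cons b t' =>
      intro e he x hx
      rw [edgesOf_cons2, List.mem_cons] at he
      rcases he with rfl | he
      · rw [Sym2.mem_iff] at hx
        rcases hx with rfl | rfl <;> simp
      · have := ih e he x hx
        simp [List.mem_cons] at this ⊢
        tauto

lemma edgesOf_nondiag : ∀ (l : List V), l.Nodup → ∀ e ∈ edgesOf l, ¬ e.IsDiag := by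
  intro l
  induction l with
  | nil => intro _ e he; simp [edgesOf_nil] at he
  | cons a t ih =>
    cases t with
    | nil => intro _ e he; simp [edgesOf_single] at he
    | cons b t' =>
      intro hnd e he
      rw [edgesOf_cons2, List.mem_cons] at he
      rcases he with rfl | he
      · rw [Sym2.mk_isDiag_iff]
        intro h
        rw [List.nodup_cons] at hnd
        exact hnd.1 (h ▸ List.mem_cons_self (a := b) (l := t'))
      · exact ih (List.nodup_cons.mp hnd).2 e he

lemma edgesOf_countP_zero (x : V) : ∀ (l : List V), x ∉ l →
    (edgesOf l).countP (fun e => decide (x ∈ e)) = 0 := by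
  intro l
  induction l with
  | nil => intro _; rfl
  | cons a t ih =>
    cases t with
    | nil => intro _; rfl
    | cons b t' =>
      intro hx
      rw [edgesOf_cons2, List.countP_cons]
      have hxa : x ≠ a := fun h => hx (h ▸ List.mem_cons_self (a := a))
      have hxb : x ∉ b :: t' := fun h => hx (List.mem_cons_of_mem a h)
      rw [ih hxb]
      have hxb' : x ≠ b := fun h => hxb (h ▸ List.mem_cons_self (a := b) (l := t'))
      simp [Sym2.mem_iff, hxa, hxb']

lemma edgesOf_countP_head (x : V) : ∀ (t : List V), (x :: t).Nodup →
    (edgesOf (x :: t)).countP (fun e => decide (x ∈ e)) ≤ 1 := by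
  intro t hnd
  cases t with
  | nil => simp [edgesOf_single]
  | cons b t' =>
    rw [edgesOf_cons2, List.countP_cons]
    have hx : x ∉ b :: t' := (List.nodup_cons.mp hnd).1
    rw [edgesOf_countP_zero x _ hx]
    simp

lemma edgesOf_countP_two (x : V) : ∀ (l : List V), l.Nodup →
    (edgesOf l).countP (fun e => decide (x ∈ e)) ≤ 2 := by
  intro l
  induction l with
  | nil => intro _; simp [edgesOf_nil]
  | cons a t ih =>
    cases t with
    | nil => intro _; simp [edgesOf_single]
    | cons b t' =>
      intro hnd
      by_cases hxa : x = a
      · subst hxa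
        exact le_trans (edgesOf_countP_head x _ hnd) (by omega)
      · rw [edgesOf_cons2, List.countP_cons]
        have ht : (b :: t').Nodup := (List.nodup_cons.mp hnd).2
        by_cases hxb : x = b
        · subst hxb
          have h1 := edgesOf_countP_head x t' ht
          have h2 : (if decide (x ∈ s(a, x)) = true then 1 else 0) ≤ 1 := by
            split <;> omega
          omega
        · have := ih ht
          simp [Sym2.mem_iff, hxa, hxb]
          omega

lemma pathEdges_filter_card (x : V) (l : List V) (hnd : l.Nodup) :
    ((pathEdges l).filter (fun e => x ∈ e)).card ≤ 2 := by
  have h1 : pathEdges l = (edgesOf l).toFinset := rfl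
  rw [h1]
  have h2 : (edgesOf l).toFinset.filter (fun e => x ∈ e)
      = ((edgesOf l).filter (fun e => decide (x ∈ e))).toFinset := by
    rw [List.toFinset_filter]
    apply Finset.filter_congr
    intro e _
    simp
  rw [h2]
  calc ((edgesOf l).filter (fun e => decide (x ∈ e))).toFinset.card
      ≤ ((edgesOf l).filter (fun e => decide (x ∈ e))).length := List.toFinset_card_le _
    _ = (edgesOf l).countP (fun e => decide (x ∈ e)) := (List.countP_eq_length_filter).symm
    _ ≤ 2 := edgesOf_countP_two x l hnd

end pathstruct

section Fstruct
variable {r : ℕ} {P : Fin r → List V}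

lemma F_nondiag (hPnd : ∀ j, (P j).Nodup) :
    ∀ e ∈ Finset.univ.sup (fun j => pathEdges (P j)), ¬ e.IsDiag := by
  intro e he
  rw [Finset.mem_sup] at he
  obtain ⟨j, _, hj⟩ := he
  have : e ∈ edgesOf (P j) := List.mem_toFinset.mp hj
  exact edgesOf_nondiag (P j) (hPnd j) e this

lemma F_deg2 (hPnd : ∀ j, (P j).Nodup)
    (hPdisj : ∀ i j, i ≠ j → Disjoint (P i).toFinset (P j).toFinset) :
    ∀ x, edeg (Finset.univ.sup (fun j => pathEdges (P j))) x ≤ 2 := by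
  intro x
  set F := Finset.univ.sup (fun j => pathEdges (P j)) with hF
  by_cases hx : ∃ e ∈ F, x ∈ e
  · obtain ⟨e0, he0, hxe0⟩ := hx
    rw [hF, Finset.mem_sup] at he0
    obtain ⟨j0, _, hj0⟩ := he0
    have hxP0 : x ∈ (P j0).toFinset :=
      List.mem_toFinset.mpr (edgesOf_mem (P j0) e0 (List.mem_toFinset.mp hj0) x hxe0)
    have hsub : F.filter (fun e => x ∈ e) ⊆ (pathEdges (P j0)).filter (fun e => x ∈ e) := by
      intro f hf
      rw [Finset.mem_filter] at hf ⊢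
      refine ⟨?_, hf.2⟩
      have hfF := hf.1
      rw [hF, Finset.mem_sup] at hfF
      obtain ⟨j1, _, hj1⟩ := hfF
      have hxP1 : x ∈ (P j1).toFinset :=
        List.mem_toFinset.mpr (edgesOf_mem (P j1) f (List.mem_toFinset.mp hj1) x hf.2)
      by_cases hjj : j1 = j0
      · exact hjj ▸ hj1
      · exact absurd hxP0 (Finset.disjoint_left.mp (hPdisj j1 j0 hjj) hxP1)
    calc edeg F x ≤ ((pathEdges (P j0)).filter (fun e => x ∈ e)).card :=
          Finset.card_le_card hsub
      _ ≤ 2 := pathEdges_filter_card x (P j0) (hPnd j0)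
  · unfold edeg
    rw [Finset.card_eq_zero.mpr]
    · omega
    · rw [Finset.filter_eq_empty_iff]
      intro f hf hxf
      exact hx ⟨f, hf, hxf⟩

end Fstruct

section mainlemma
variable {d : V → V → ℝ}

lemma madd {α : Type*} (A B : Multiset α) (x : α) : A + (x ::ₘ B) = x ::ₘ (A + B) := by
  rw [← Multiset.singleton_add, ← Multiset.singleton_add, add_left_comm]

lemma finish_case (hd : IsMetric d) {S : Finset V} {T T2 F F2 : Finset (Sym2 V)}
    {a v a' x y : V} {L M zs0 : List V} {R : Multiset (Sym2 V)} {e : Sym2 V}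
    (hM : M = a :: zs0)
    (hperm : M.Perm (v :: L))
    (hvL : v ∉ L) (hndL : L.Nodup) (htfL : L.toFinset = S.erase v) (hvS : v ∈ S)
    (hKM : walkEdges (M ++ [a]) = s(x, v) ::ₘ s(v, y) ::ₘ R)
    (hKL : walkEdges (L ++ [a']) = s(x, y) ::ₘ R)
    (hF2K : F2 ⊆ (walkEdges (L ++ [a'])).toFinset)
    (hcostK : walkCost d (L ++ [a']) ≤ 2 * cost d T2)
    (hcond : s(x, y) ∉ F2 ∨ s(x, y) ∈ R)
    (he : e = s(x, v) ∨ e = s(v, y))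
    (hFsplit : ∀ f ∈ F, f = e ∨ f ∈ F2)
    (hcT : cost d T2 + ecost d e = cost d T) :
    ∃ zs : List V, (a :: zs).Nodup ∧ (a :: zs).toFinset = S ∧
      F ⊆ cycleEdges (a :: zs) ∧ walkCost d (a :: zs ++ [a]) ≤ 2 * cost d T := by
  obtain ⟨hndM, htfM⟩ := perm_pack hperm hvL hndL
  refine ⟨zs0, hM ▸ hndM, ?_, ?_, ?_⟩
  · rw [← hM, htfM, htfL, Finset.insert_erase hvS]
  · rw [cycleEdges_eq]
    have h1 : a :: zs0 ++ [a] = M ++ [a] := by rw [hM]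
    rw [h1, hKM]
    intro f hf
    rcases hFsplit f hf with rfl | hf2
    · rw [Multiset.mem_toFinset]
      rcases he with rfl | rfl
      · exact Multiset.mem_cons_self _ _
      · exact Multiset.mem_cons.mpr (Or.inr (Multiset.mem_cons_self _ _))
    · have := hF2K hf2
      rw [hKL] at this
      exact pack_mem x y v R F2 hcond f hf2 this
  · have h1 : a :: zs0 ++ [a] = M ++ [a] := by rw [hM]
    unfold walkCost at hcostK ⊢
    rw [h1, hKM]
    rw [hKL] at hcostK
    have := pack_cost hd x y v R e he
    linarith

end mainlemma

lemma head_ins (p q Y : List V) (u b : V) (t : List V) (h : p ++ u :: q = b :: t) :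
    ∃ zs0, p ++ u :: Y = b :: zs0 := by
  cases p with
  | nil =>
    simp only [List.nil_append] at h ⊢
    injection h with h1 _
    exact ⟨Y, by rw [h1]⟩
  | cons pc pt =>
    simp only [List.cons_append] at h ⊢
    injection h with h1 _
    exact ⟨pt ++ u :: Y, by rw [h1]⟩

lemma main_cycle (d : V → V → ℝ) (hd : IsMetric d) :
    ∀ (n : ℕ) (S : Finset V) (T F : Finset (Sym2 V)) (a : V),
      S.card ≤ n → a ∈ S →
      (∀ e ∈ T, ¬ e.IsDiag) →
      (∀ e ∈ T, ∀ x ∈ e, x ∈ S) →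
      T.card + 1 = S.card →
      (∀ x ∈ S, ∀ y ∈ S, (SimpleGraph.fromEdgeSet (T : Set (Sym2 V))).Reachable x y) →
      F ⊆ T → (∀ x, edeg F x ≤ 2) →
      ∃ zs : List V, (a :: zs).Nodup ∧ (a :: zs).toFinset = S ∧
        F ⊆ cycleEdges (a :: zs) ∧ walkCost d (a :: zs ++ [a]) ≤ 2 * cost d T := by
  intro n
  induction n with
  | zero =>
    intro S T F a hSn haS
    exact absurd (Finset.card_pos.mpr ⟨a, haS⟩) (by omega)
  | succ n ih =>
    intro S T F a hSn haS hnd hsub hcard hconn hFT hFdeg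
    by_cases hsmall : S.card ≤ n
    · exact ih S T F a hsmall haS hnd hsub hcard hconn hFT hFdeg
    have hScard : S.card = n + 1 := by omega
    by_cases hS1 : S.card = 1
    · -- base case: single vertex
      have hSa : S = {a} := by
        obtain ⟨b, hb⟩ := Finset.card_eq_one.mp hS1
        rw [hb] at haS ⊢
        rw [Finset.mem_singleton] at haS
        rw [haS]
      have hT0 : T = ∅ := by
        rw [← Finset.card_eq_zero]; omega
      have hF0 : F = ∅ := by
        rw [hT0] at hFT
        exact Finset.subset_empty.mp hFT
      refine ⟨[], by simp, by simp [hSa], by rw [hF0]; exact Finset.empty_subset _, ?_⟩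
      have h1 : walkCost d ([a] ++ [a]) = 0 := by
        show ((walkEdges [a, a]).map (ecost d)).sum = 0
        have : walkEdges [a, a] = s(a, a) ::ₘ 0 := rfl
        rw [this]
        simp [ecost_diag hd]
      simp only [List.cons_append, List.nil_append] at h1 ⊢
      rw [h1, hT0]
      unfold cost
      simp
    have hS2 : 2 ≤ S.card := by omega
    -- find a good leaf
    obtain ⟨u, v, hune, heT, hvdeg, hgood⟩ :=
      good_leaf hnd hsub hcard hconn hS2 hFT hFdeg
    have hvS : v ∈ S := hsub _ heT v (by simp)
    have huS : u ∈ S := hsub _ heT u (by simp)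
    have huniq : ∀ f ∈ T, v ∈ f → f = s(u, v) := by
      intro f hf hvf
      exact edeg_unique (le_of_eq hvdeg) f hf _ heT hvf (by simp)
    set e : Sym2 V := s(u, v) with hedef
    set T2 : Finset (Sym2 V) := T.filter (fun f => ¬ v ∈ f) with hT2def
    set F2 : Finset (Sym2 V) := F.erase e with hF2def
    have hT2eq : T2 = T.erase e := by
      ext f
      rw [hT2def, Finset.mem_filter, Finset.mem_erase]
      constructor
      · rintro ⟨hf, hvf⟩
        refine ⟨?_, hf⟩
        rintro rfl
        exact hvf (by rw [hedef]; simp)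
      · rintro ⟨hne, hf⟩
        refine ⟨hf, fun hvf => hne (huniq f hf hvf)⟩
    have hTpos : 1 ≤ T.card := Finset.card_pos.mpr ⟨e, heT⟩
    have hcardT2 : T2.card + 1 = T.card := by
      rw [hT2eq, Finset.card_erase_of_mem heT]; omega
    have hvScard : (S.erase v).card + 1 = S.card := by
      rw [Finset.card_erase_of_mem hvS]; omega
    have hcard2 : T2.card + 1 = (S.erase v).card := by omega
    have hnd2 : ∀ f ∈ T2, ¬ f.IsDiag := fun f hf => hnd f (Finset.filter_subset _ _ hf)
    have hsub2 : ∀ f ∈ T2, ∀ x ∈ f, x ∈ S.erase v := by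
      intro f hf x hx
      rw [hT2def, Finset.mem_filter] at hf
      refine Finset.mem_erase.mpr ⟨?_, hsub f hf.1 x hx⟩
      rintro rfl
      exact hf.2 hx
    have hF2T2 : F2 ⊆ T2 := by
      intro f hf
      rw [hF2def, Finset.mem_erase] at hf
      rw [hT2def, Finset.mem_filter]
      refine ⟨hFT hf.2, fun hvf => hf.1 (huniq f (hFT hf.2) hvf)⟩
    have hF2deg : ∀ x, edeg F2 x ≤ 2 :=
      fun x => le_trans (edeg_mono (Finset.erase_subset _ _) x) (hFdeg x)
    have hF2u : edeg F2 u ≤ 1 := by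
      rcases hgood with hin | hdeg
      · have h1 : F2.filter (fun f => u ∈ f) = (F.filter (fun f => u ∈ f)).erase e := by
          rw [hF2def, Finset.filter_erase]
        have h2 : e ∈ F.filter (fun f => u ∈ f) :=
          Finset.mem_filter.mpr ⟨hin, by rw [hedef]; simp⟩
        have h3 := hFdeg u
        unfold edeg at h3 ⊢
        rw [h1, Finset.card_erase_of_mem h2]
        omega
      · exact le_trans (edeg_mono (Finset.erase_subset _ _) u) hdeg
    have hF2nd : ∀ f ∈ F2, ¬ f.IsDiag := fun f hf => hnd2 f (hF2T2 hf)
    have hconn2 : ∀ x ∈ S.erase v, ∀ y ∈ S.erase v,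
        (SimpleGraph.fromEdgeSet (T2 : Set (Sym2 V))).Reachable x y := by
      have hfilter : T.filter (fun f => ∀ b ∈ ({v} : Finset V), ¬ b ∈ f) = T2 := by
        rw [hT2def]
        apply Finset.filter_congr
        intro f _
        simp
      intro x hx y hy
      rw [Finset.mem_erase] at hx hy
      obtain ⟨W⟩ := hconn x hx.2 y hy.2
      have := reach_avoid T {v} (by
        intro b hb
        rw [Finset.mem_singleton] at hb
        subst hb
        exact edeg_unique (le_of_eq hvdeg)) W.length x y
        (by simp [hx.1]) (by simp [hy.1]) W le_rfl
      rwa [hfilter] at this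
    -- the start vertex for the smaller cycle
    set a' : V := if a = v then u else a with ha'def
    have ha'S : a' ∈ S.erase v := by
      rw [ha'def]
      split
      · exact Finset.mem_erase.mpr ⟨hune, huS⟩
      · next hav => exact Finset.mem_erase.mpr ⟨hav, haS⟩
    obtain ⟨zs', hndL, htfL, hF2cyc, hcostL⟩ :=
      ih (S.erase v) T2 F2 a' (by omega) ha'S hnd2 hsub2 hcard2 hconn2 hF2T2 hF2deg
    set L : List V := a' :: zs' with hLdef
    have huL : u ∈ L := by
      rw [← List.mem_toFinset, htfL]
      exact Finset.mem_erase.mpr ⟨hune, huS⟩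
    have hvL : v ∉ L := by
      rw [← List.mem_toFinset, htfL]
      simp
    have hF2K : F2 ⊆ (walkEdges (L ++ [a'])).toFinset := by
      rw [cycleEdges_eq] at hF2cyc
      intro f hf
      have := hF2cyc hf
      rwa [show a' :: zs' ++ [a'] = L ++ [a'] from rfl] at this
    have hcostK : walkCost d (L ++ [a']) ≤ 2 * cost d T2 := hcostL
    have hcT : cost d T2 + ecost d e = cost d T := by
      rw [hT2eq]
      exact Finset.sum_erase_add T _ heT
    have hFsplit : ∀ f ∈ F, f = e ∨ f ∈ F2 := by
      intro f hf
      by_cases h : f = e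
      · exact Or.inl h
      · exact Or.inr (Finset.mem_erase.mpr ⟨h, hf⟩)
    clear hconn hconn2 hsub hsub2 hgood
    by_cases hav : a = v
    · -- the tour must start at the new vertex v
      have ha'u : a' = u := by rw [ha'def, if_pos hav]
      cases zs' with
      | nil =>
        -- L = [u]
        have hL1 : L = [u] := by rw [hLdef, ha'u]
        have hKL : walkEdges (L ++ [a']) = s(u, u) ::ₘ 0 := by
          rw [hL1, ha'u]; rfl
        have hKM : walkEdges ([a, u] ++ [a]) = s(u, v) ::ₘ s(v, u) ::ₘ 0 := by
          subst hav
          show walkEdges [a, u, a] = _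
          have h0 : walkEdges [a, u, a] = s(a, u) ::ₘ s(u, a) ::ₘ 0 := rfl
          rw [h0, Multiset.cons_swap]
        refine finish_case hd (M := [a, u]) (zs0 := [u]) (x := u) (y := u) (R := 0)
          (L := L) (a' := a') (v := v) (e := e) rfl ?_ hvL hndL htfL hvS hKM hKL hF2K hcostK
          ?_ (Or.inl hedef) hFsplit hcT
        · rw [hav, hL1]
        · exact Or.inl (fun hin => hF2nd _ hin (Sym2.mk_isDiag_iff.mpr rfl))
      | cons qh qt =>
        have hLu : L = u :: qh :: qt := by rw [hLdef, ha'u]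
        have hune' : u ∉ qh :: qt := by
          have := hndL
          rw [hLu] at this
          exact (List.nodup_cons.mp this).1
        obtain hnil | ⟨z₀, z, hzq⟩ := List.eq_nil_or_concat (qh :: qt)
        · exact absurd hnil (by simp)
        rw [List.concat_eq_append] at hzq
        have hzmem : z ∈ qh :: qt := by rw [hzq]; simp
        by_cases hcond6 : s(z, u) ∉ F2 ∨ s(z, u) ∈ walkEdges L
        · -- prepend v before the whole cycle (replace closing edge)
          have hKL : walkEdges (L ++ [a']) = s(z, u) ::ₘ walkEdges L := by
            have h1 : L ++ [a'] = (u :: z₀) ++ z :: [u] := by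
              rw [hLu, ha'u, hzq]; simp
            rw [h1, walkEdges_append]
            have h2 : (u :: z₀) ++ [z] = L := by rw [hLu, hzq]; simp
            rw [h2]
            have h3 : walkEdges (z :: [u]) = s(z, u) ::ₘ 0 := rfl
            rw [h3, madd, add_zero]
          have hKM : walkEdges ((v :: L) ++ [a]) = s(z, v) ::ₘ s(v, u) ::ₘ walkEdges L := by
            have h1 : (v :: L) ++ [a] = v :: u :: ((qh :: qt) ++ [v]) := by
              rw [hLu, ← hav]; simp
            rw [h1, walkEdges_cons2]
            have h2 : u :: ((qh :: qt) ++ [v]) = (u :: z₀) ++ z :: [v] := by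
              rw [hzq]; simp
            rw [h2, walkEdges_append]
            have h3 : (u :: z₀) ++ [z] = L := by rw [hLu, hzq]; simp
            have h4 : walkEdges (z :: [v]) = s(z, v) ::ₘ 0 := rfl
            rw [h3, h4, madd, add_zero, Multiset.cons_swap]
          refine finish_case hd (M := v :: L) (zs0 := L) (x := z) (y := u)
            (R := walkEdges L) (L := L) (a' := a') (v := v) (e := e)
            (by rw [hav]) (List.Perm.refl _) hvL hndL htfL hvS hKM hKL hF2K hcostK
            hcond6 (Or.inr (hedef.trans Sym2.eq_swap)) hFsplit hcT
        · push_neg at hcond6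
          obtain ⟨hzF2, hzR⟩ := hcond6
          have hdich : s(u, qh) ∉ F2 := by
            intro hin
            have heq2 : s(u, qh) = s(z, u) :=
              edeg_unique hF2u _ hin _ hzF2 (by simp) (by simp)
            rw [Sym2.eq_iff] at heq2
            rcases heq2 with ⟨h1, h2⟩ | ⟨h1, h2⟩
            · exact hune' (h1 ▸ hzmem)
            · apply hzR
              have : s(z, u) = s(u, qh) := by rw [h2]; exact Sym2.eq_swap
              rw [this, hLu, walkEdges_cons2]
              exact Multiset.mem_cons_self _ _
          have hKL : walkEdges (L ++ [a']) = s(u, qh) ::ₘ walkEdges ((qh :: qt) ++ [u]) := by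
            have h1 : L ++ [a'] = u :: qh :: (qt ++ [u]) := by rw [hLu, ha'u]; simp
            rw [h1, walkEdges_cons2]
            have h2 : qh :: (qt ++ [u]) = (qh :: qt) ++ [u] := by simp
            rw [h2]
          have hKM : walkEdges ((v :: ((qh :: qt) ++ [u])) ++ [a])
              = s(u, v) ::ₘ s(v, qh) ::ₘ walkEdges ((qh :: qt) ++ [u]) := by
            have h1 : (v :: ((qh :: qt) ++ [u])) ++ [a] = v :: qh :: (qt ++ u :: [v]) := by
              rw [← hav]; simp
            rw [h1, walkEdges_cons2]
            have h2 : qh :: (qt ++ u :: [v]) = (qh :: qt) ++ u :: [v] := by simp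
            rw [h2, walkEdges_append]
            have h3 : walkEdges (u :: [v]) = s(u, v) ::ₘ 0 := rfl
            rw [h3, madd, add_zero, Multiset.cons_swap]
          have hperm : (v :: ((qh :: qt) ++ [u])).Perm (v :: L) := by
            rw [hLu]
            exact List.Perm.cons v (List.perm_append_singleton u (qh :: qt))
          refine finish_case hd (M := v :: ((qh :: qt) ++ [u])) (zs0 := (qh :: qt) ++ [u])
            (x := u) (y := qh) (R := walkEdges ((qh :: qt) ++ [u]))
            (L := L) (a' := a') (v := v) (e := e)
            (by rw [hav]) hperm hvL hndL htfL hvS hKM hKL hF2K hcostK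
            (Or.inl hdich) (Or.inl hedef) hFsplit hcT
    · -- the tour starts at a ≠ v
      have haa' : a' = a := by rw [ha'def, if_neg hav]
      obtain ⟨p, q, hpq⟩ := List.append_of_mem huL
      have hndpuq : (p ++ u :: q).Nodup := hpq ▸ hndL
      have hup : u ∉ p := fun hm =>
        (List.nodup_append'.mp hndpuq).2.2 hm List.mem_cons_self
      have huq : u ∉ q := (List.nodup_cons.mp (List.nodup_append.mp hndpuq).2.1).1
      have hLsplit : a :: zs' = p ++ u :: q := by
        have h := hLdef.symm.trans hpq
        rwa [haa'] at h
      cases q with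
      | cons qh qt =>
        have hKA : walkEdges (L ++ [a'])
            = s(u, qh) ::ₘ (walkEdges (p ++ [u]) + walkEdges (qh :: (qt ++ [a]))) := by
          have h1 : L ++ [a'] = p ++ u :: (qh :: (qt ++ [a])) := by rw [haa', hpq]; simp
          rw [h1, walkEdges_append, walkEdges_cons2, madd]
        by_cases hcondA : s(u, qh) ∉ F2
            ∨ s(u, qh) ∈ walkEdges (p ++ [u]) + walkEdges (qh :: (qt ++ [a]))
        · -- insert v right after u
          obtain ⟨zs0, hM⟩ := head_ins p (qh :: qt) (v :: qh :: qt) u a zs' hLsplit.symm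
          have hKM : walkEdges ((p ++ u :: v :: qh :: qt) ++ [a])
              = s(u, v) ::ₘ s(v, qh) ::ₘ (walkEdges (p ++ [u]) + walkEdges (qh :: (qt ++ [a]))) := by
            have h1 : (p ++ u :: v :: qh :: qt) ++ [a] = p ++ u :: (v :: qh :: (qt ++ [a])) := by
              simp
            rw [h1, walkEdges_append, walkEdges_cons2, walkEdges_cons2, madd, madd]
          have hperm : (p ++ u :: v :: qh :: qt).Perm (v :: L) := by
            have h2 : p ++ u :: v :: qh :: qt = (p ++ [u]) ++ v :: (qh :: qt) := by simp
            have h3 : v :: ((p ++ [u]) ++ (qh :: qt)) = v :: L := by rw [hpq]; simp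
            rw [h2, ← h3]
            exact List.perm_middle
          exact finish_case hd hM hperm hvL hndL htfL hvS hKM hKA hF2K hcostK
            hcondA (Or.inl hedef) hFsplit hcT
        · push_neg at hcondA
          obtain ⟨hinF2, hRA⟩ := hcondA
          cases p with
          | nil =>
            -- u is the head of L
            have h := hLsplit
            simp only [List.nil_append] at h
            injection h with hau hzs
            obtain hnil | ⟨z₀, z, hzq⟩ := List.eq_nil_or_concat (qh :: qt)
            · exact absurd hnil (by simp)
            rw [List.concat_eq_append] at hzq
            have hzmem : z ∈ qh :: qt := by rw [hzq]; simp
            have hLu : L = u :: qh :: qt := by rw [hpq]; simp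
            have hdich : s(z, u) ∉ F2 := by
              intro hin
              have heq2 : s(u, qh) = s(z, u) :=
                edeg_unique hF2u _ hinF2 _ hin (by simp) (by simp)
              rw [Sym2.eq_iff] at heq2
              rcases heq2 with ⟨h1, h2⟩ | ⟨h1, h2⟩
              · exact huq (h1 ▸ hzmem)
              · apply hRA
                have hmem : s(u, qh) ∈ walkEdges (qh :: (qt ++ [a])) := by
                  have h5 : qh :: (qt ++ [a]) = z₀ ++ z :: [u] := by
                    rw [hau]
                    have : qh :: (qt ++ [u]) = (qh :: qt) ++ [u] := by simp
                    rw [this, hzq]; simp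
                  rw [h5, walkEdges_append]
                  apply Multiset.mem_add.mpr (Or.inr _)
                  have h6 : walkEdges (z :: [u]) = s(z, u) ::ₘ 0 := rfl
                  rw [h6]
                  have h7 : s(u, qh) = s(z, u) := by rw [h2]; exact Sym2.eq_swap
                  rw [h7]
                  exact Multiset.mem_cons_self _ _
                exact Multiset.mem_add.mpr (Or.inr hmem)
            have hKB : walkEdges (L ++ [a']) = s(z, u) ::ₘ walkEdges L := by
              have h1 : L ++ [a'] = (u :: z₀) ++ z :: [u] := by
                rw [haa', hau, hLu, hzq]; simp
              rw [h1, walkEdges_append]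
              have h2 : (u :: z₀) ++ [z] = L := by rw [hLu, hzq]; simp
              have h3 : walkEdges (z :: [u]) = s(z, u) ::ₘ 0 := rfl
              rw [h2, h3, madd, add_zero]
            have hKM : walkEdges ((L ++ [v]) ++ [a]) = s(z, v) ::ₘ s(v, u) ::ₘ walkEdges L := by
              have h1 : (L ++ [v]) ++ [a] = (u :: z₀) ++ z :: [v, u] := by
                rw [hau, hLu, hzq]; simp
              rw [h1, walkEdges_append]
              have h2 : (u :: z₀) ++ [z] = L := by rw [hLu, hzq]; simp
              have h3 : walkEdges (z :: [v, u]) = s(z, v) ::ₘ s(v, u) ::ₘ 0 := rfl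
              rw [h2, h3, madd, Multiset.cons_swap, madd, add_zero]
              rw [Multiset.cons_swap]
            have hM : L ++ [v] = a :: (qh :: qt ++ [v]) := by
              rw [hLu, hau]; simp
            exact finish_case hd hM (List.perm_append_singleton v L) hvL hndL htfL hvS
              hKM hKB hF2K hcostK (Or.inl hdich)
              (Or.inr (hedef.trans Sym2.eq_swap)) hFsplit hcT
          | cons pc pt =>
            obtain hnil | ⟨p₀, g, hp⟩ := List.eq_nil_or_concat (pc :: pt)
            · exact absurd hnil (by simp)
            rw [List.concat_eq_append] at hp
            have hgp : g ∈ pc :: pt := by rw [hp]; simp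
            have hdich : s(g, u) ∉ F2 := by
              intro hin
              have heq2 : s(u, qh) = s(g, u) :=
                edeg_unique hF2u _ hinF2 _ hin (by simp) (by simp)
              rw [Sym2.eq_iff] at heq2
              rcases heq2 with ⟨h1, h2⟩ | ⟨h1, h2⟩
              · exact hup (h1 ▸ hgp)
              · apply hRA
                apply Multiset.mem_add.mpr (Or.inl _)
                have h5 : (pc :: pt) ++ [u] = p₀ ++ g :: [u] := by rw [hp]; simp
                rw [h5, walkEdges_append]
                apply Multiset.mem_add.mpr (Or.inr _)
                have h6 : walkEdges (g :: [u]) = s(g, u) ::ₘ 0 := rfl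
                rw [h6]
                have h7 : s(u, qh) = s(g, u) := by rw [h2]; exact Sym2.eq_swap
                rw [← h7]
                exact Multiset.mem_cons_self _ _
            have hKB : walkEdges (L ++ [a'])
                = s(g, u) ::ₘ (walkEdges (p₀ ++ [g]) + walkEdges (u :: qh :: (qt ++ [a]))) := by
              have h1 : L ++ [a'] = p₀ ++ g :: (u :: qh :: (qt ++ [a])) := by
                rw [haa', hpq, hp]; simp
              rw [h1, walkEdges_append, walkEdges_cons2, madd]
            have hKM : walkEdges (((pc :: pt) ++ v :: u :: qh :: qt) ++ [a])
                = s(g, v) ::ₘ s(v, u) ::ₘ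
                  (walkEdges (p₀ ++ [g]) + walkEdges (u :: qh :: (qt ++ [a]))) := by
              have h1 : ((pc :: pt) ++ v :: u :: qh :: qt) ++ [a]
                  = p₀ ++ g :: (v :: u :: qh :: (qt ++ [a])) := by
                rw [hp]; simp
              rw [h1, walkEdges_append, walkEdges_cons2, walkEdges_cons2, madd, madd]
            have hperm : ((pc :: pt) ++ v :: u :: qh :: qt).Perm (v :: L) := by
              have h3 : v :: ((pc :: pt) ++ (u :: qh :: qt)) = v :: L := by rw [hpq]
              rw [← h3]
              exact List.perm_middle
            have hM : (pc :: pt) ++ v :: u :: qh :: qt = a :: (pt ++ v :: u :: qh :: qt) := by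
              have h := hLsplit
              simp only [List.cons_append] at h
              injection h with h1 _
              rw [← h1]; simp
            exact finish_case hd hM hperm hvL hndL htfL hvS hKM hKB hF2K hcostK
              (Or.inl hdich) (Or.inr (hedef.trans Sym2.eq_swap)) hFsplit hcT
      | nil =>
        cases p with
        | nil =>
          -- L = [u]
          have h := hLsplit
          simp only [List.nil_append] at h
          injection h with hau hzs
          have hLu : L = [u] := by rw [hpq]; simp
          have hKL : walkEdges (L ++ [a']) = s(u, u) ::ₘ 0 := by
            rw [haa', hau, hLu]; rfl
          have hKM : walkEdges (([u, v]) ++ [a]) = s(u, v) ::ₘ s(v, u) ::ₘ 0 := by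
            rw [hau]; rfl
          have hM : [u, v] = a :: [v] := by rw [hau]
          have hperm : ([u, v]).Perm (v :: L) := by
            rw [hLu]
            exact List.perm_append_singleton v [u]
          exact finish_case hd hM hperm hvL hndL htfL hvS hKM hKL hF2K hcostK
            (Or.inl (fun hin => hF2nd _ hin (Sym2.mk_isDiag_iff.mpr rfl)))
            (Or.inl hedef) hFsplit hcT
        | cons pc pt =>
          have hKA : walkEdges (L ++ [a']) = s(u, a) ::ₘ walkEdges ((pc :: pt) ++ [u]) := by
            have h1 : L ++ [a'] = (pc :: pt) ++ u :: [a] := by rw [haa', hpq]; simp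
            rw [h1, walkEdges_append]
            have h3 : walkEdges (u :: [a]) = s(u, a) ::ₘ 0 := rfl
            rw [h3, madd, add_zero]
          by_cases hcondA : s(u, a) ∉ F2 ∨ s(u, a) ∈ walkEdges ((pc :: pt) ++ [u])
          · obtain ⟨zs0, hM⟩ := head_ins (pc :: pt) [] [v] u a zs' hLsplit.symm
            have hKM : walkEdges (((pc :: pt) ++ u :: [v]) ++ [a])
                = s(u, v) ::ₘ s(v, a) ::ₘ walkEdges ((pc :: pt) ++ [u]) := by
              have h1 : ((pc :: pt) ++ u :: [v]) ++ [a] = (pc :: pt) ++ u :: [v, a] := by simp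
              rw [h1, walkEdges_append]
              have h3 : walkEdges (u :: [v, a]) = s(u, v) ::ₘ s(v, a) ::ₘ 0 := rfl
              rw [h3, madd, Multiset.cons_swap, madd, add_zero, Multiset.cons_swap]
            have hperm : ((pc :: pt) ++ u :: [v]).Perm (v :: L) := by
              have h2 : (pc :: pt) ++ u :: [v] = ((pc :: pt) ++ [u]) ++ [v] := by simp
              have h3 : v :: ((pc :: pt) ++ [u]) = v :: L := by rw [hpq]
              rw [h2, ← h3]
              exact List.perm_append_singleton v _
            exact finish_case hd hM hperm hvL hndL htfL hvS hKM hKA hF2K hcostK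
              hcondA (Or.inl hedef) hFsplit hcT
          · push_neg at hcondA
            obtain ⟨hinF2, hRA⟩ := hcondA
            obtain hnil | ⟨p₀, g, hp⟩ := List.eq_nil_or_concat (pc :: pt)
            · exact absurd hnil (by simp)
            rw [List.concat_eq_append] at hp
            have hgp : g ∈ pc :: pt := by rw [hp]; simp
            have hdich : s(g, u) ∉ F2 := by
              intro hin
              have heq2 : s(u, a) = s(g, u) :=
                edeg_unique hF2u _ hinF2 _ hin (by simp) (by simp)
              rw [Sym2.eq_iff] at heq2
              rcases heq2 with ⟨h1, h2⟩ | ⟨h1, h2⟩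
              · exact hup (h1 ▸ hgp)
              · apply hRA
                have h5 : (pc :: pt) ++ [u] = p₀ ++ g :: [u] := by rw [hp]; simp
                rw [h5, walkEdges_append]
                apply Multiset.mem_add.mpr (Or.inr _)
                have h6 : walkEdges (g :: [u]) = s(g, u) ::ₘ 0 := rfl
                rw [h6]
                have h7 : s(u, a) = s(g, u) := by rw [h2]; exact Sym2.eq_swap
                rw [h7]
                exact Multiset.mem_cons_self _ _
            have hKB : walkEdges (L ++ [a'])
                = s(g, u) ::ₘ (walkEdges (p₀ ++ [g]) + walkEdges (u :: [a])) := by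
              have h1 : L ++ [a'] = p₀ ++ g :: (u :: [a]) := by rw [haa', hpq, hp]; simp
              rw [h1, walkEdges_append, walkEdges_cons2, madd]
            have hKM : walkEdges (((pc :: pt) ++ v :: [u]) ++ [a])
                = s(g, v) ::ₘ s(v, u) ::ₘ (walkEdges (p₀ ++ [g]) + walkEdges (u :: [a])) := by
              have h1 : ((pc :: pt) ++ v :: [u]) ++ [a] = p₀ ++ g :: (v :: u :: [a]) := by
                rw [hp]; simp
              rw [h1, walkEdges_append, walkEdges_cons2, walkEdges_cons2, madd, madd]
            have hperm : ((pc :: pt) ++ v :: [u]).Perm (v :: L) := by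
              have h3 : v :: ((pc :: pt) ++ [u]) = v :: L := by rw [hpq]
              rw [← h3]
              exact List.perm_middle
            have hM : (pc :: pt) ++ v :: [u] = a :: (pt ++ v :: [u]) := by
              have h := hLsplit
              simp only [List.cons_append] at h
              injection h with h1 _
              rw [← h1]; simp
            exact finish_case hd hM hperm hvL hndL htfL hvS hKM hKB hF2K hcostK
              (Or.inl hdich) (Or.inr (hedef.trans Sym2.eq_swap)) hFsplit hcT


/-- for the k-stage problem, given a forest `F` of at least `q` edges
which is a union of pairwise vertex-disjoint paths, and minimum spanning trees `T' i`
containing `F`, there are tours whose common intersection has at least `q` edges and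
whose total cost is at most twice the total cost of the trees. -/
theorem stmt12 {V : Type*} [Fintype V] [DecidableEq V]
    (k : ℕ) (hk : 1 ≤ k) (q : ℕ) (hq : q < Fintype.card V)
    (d : Fin k → V → V → ℝ) (hd : ∀ i, IsMetric (d i))
    (r : ℕ) (P : Fin r → List V)
    (hPnd : ∀ j, (P j).Nodup)
    (hPdisj : ∀ i j, i ≠ j → Disjoint (P i).toFinset (P j).toFinset)
    (F : Finset (Sym2 V)) (hF : F = Finset.univ.sup fun j => pathEdges (P j))
    (hFq : q ≤ F.card)
    (T' : Fin k → Finset (Sym2 V))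
    (hT'tree : ∀ i, IsSpanningTree (T' i)) (hT'F : ∀ i, F ⊆ T' i)
    (hT'min : ∀ i, ∀ S : Finset (Sym2 V), IsSpanningTree S → F ⊆ S →
      cost (d i) (T' i) ≤ cost (d i) S) :
    ∃ C : Fin k → List V, (∀ i, IsHamCycle (C i)) ∧
      q ≤ (Finset.univ.inf fun i => cycleEdges (C i)).card ∧
      ∑ i, cost (d i) (cycleEdges (C i)) ≤ 2 * ∑ i, cost (d i) (T' i) := by

  classical
  have hVpos : 0 < Fintype.card V := by omega
  obtain ⟨a⟩ : Nonempty V := Fintype.card_pos_iff.mp hVpos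
  have hFnd : ∀ f ∈ F, ¬ f.IsDiag := by
    rw [hF]; exact F_nondiag hPnd
  have hFdeg : ∀ x, edeg F x ≤ 2 := by
    rw [hF]; exact F_deg2 hPnd hPdisj
  have H : ∀ i : Fin k, ∃ zs : List V, (a :: zs).Nodup ∧ (a :: zs).toFinset = Finset.univ ∧
      F ⊆ cycleEdges (a :: zs) ∧
      walkCost (d i) (a :: zs ++ [a]) ≤ 2 * cost (d i) (T' i) := by
    intro i
    set T0 : Finset (Sym2 V) := (T' i).filter (fun f => ¬ f.IsDiag) with hT0def
    have hG : SimpleGraph.fromEdgeSet (T0 : Set (Sym2 V))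
        = SimpleGraph.fromEdgeSet ((T' i) : Set (Sym2 V)) := by
      ext x y
      rw [SimpleGraph.fromEdgeSet_adj, SimpleGraph.fromEdgeSet_adj]
      constructor
      · rintro ⟨h1, h2⟩
        exact ⟨Finset.mem_coe.mpr (Finset.mem_filter.mp (Finset.mem_coe.mp h1)).1, h2⟩
      · rintro ⟨h1, h2⟩
        refine ⟨Finset.mem_coe.mpr (Finset.mem_filter.mpr ⟨Finset.mem_coe.mp h1, ?_⟩), h2⟩
        rw [Sym2.mk_isDiag_iff]
        exact h2
    have htree0 : (SimpleGraph.fromEdgeSet (T0 : Set (Sym2 V))).IsTree := by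
      rw [hG]; exact hT'tree i
    have hedgeset : ∀ f, f ∈ T0 ↔ f ∈ (SimpleGraph.fromEdgeSet (T0 : Set (Sym2 V))).edgeSet := by
      intro f
      rw [SimpleGraph.edgeSet_fromEdgeSet, Set.mem_diff]
      constructor
      · intro h
        exact ⟨Finset.mem_coe.mpr h, (Finset.mem_filter.mp h).2⟩
      · rintro ⟨h1, h2⟩
        exact Finset.mem_coe.mp h1
    letI : Fintype ((SimpleGraph.fromEdgeSet (T0 : Set (Sym2 V))).edgeSet) :=
      Fintype.ofFinset T0 hedgeset
    have hedgefin : (SimpleGraph.fromEdgeSet (T0 : Set (Sym2 V))).edgeFinset = T0 := by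
      ext f
      rw [SimpleGraph.mem_edgeFinset]
      exact (hedgeset f).symm
    have hcard0 : T0.card + 1 = (Finset.univ : Finset V).card := by
      rw [← hedgefin, Finset.card_univ]
      exact htree0.card_edgeFinset
    have hnd0 : ∀ f ∈ T0, ¬ f.IsDiag := fun f hf => (Finset.mem_filter.mp hf).2
    have hsub0 : ∀ f ∈ T0, ∀ x ∈ f, x ∈ (Finset.univ : Finset V) := fun _ _ x _ =>
      Finset.mem_univ x
    have hconn0 : ∀ x ∈ (Finset.univ : Finset V), ∀ y ∈ (Finset.univ : Finset V),
        (SimpleGraph.fromEdgeSet (T0 : Set (Sym2 V))).Reachable x y := fun x _ y _ =>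
      htree0.isConnected.preconnected x y
    have hFT0 : F ⊆ T0 := fun f hf =>
      Finset.mem_filter.mpr ⟨hT'F i hf, hFnd f hf⟩
    obtain ⟨zs, h1, h2, h3, h4⟩ := main_cycle (d i) (hd i) (Fintype.card V) Finset.univ T0 F a
      (by rw [Finset.card_univ]) (Finset.mem_univ a) hnd0 hsub0 hcard0 hconn0 hFT0 hFdeg
    refine ⟨zs, h1, h2, h3, le_trans h4 ?_⟩
    have hsub' : cost (d i) T0 ≤ cost (d i) (T' i) := by
      apply Finset.sum_le_sum_of_subset_of_nonneg (Finset.filter_subset _ _)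
      intro f _ _
      exact ecost_nonneg (hd i) f
    linarith
  choose zs hndC htfC hFC hcostC using H
  refine ⟨fun i => a :: zs i, ?_, ?_, ?_⟩
  · intro i
    exact ⟨hndC i, fun x => by rw [← List.mem_toFinset, htfC i]; exact Finset.mem_univ x⟩
  · calc q ≤ F.card := hFq
      _ ≤ (Finset.univ.inf fun i => cycleEdges (a :: zs i)).card := by
          apply Finset.card_le_card
          exact Finset.le_inf (fun i _ => hFC i)
  · have hle : ∀ i ∈ (Finset.univ : Finset (Fin k)),
        cost (d i) (cycleEdges (a :: zs i)) ≤ 2 * cost (d i) (T' i) := by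
      intro i _
      refine le_trans ?_ (hcostC i)
      rw [cycleEdges_eq]
      exact toFinset_sum_le _ _ (ecost_nonneg (hd i))
    calc ∑ i, cost (d i) (cycleEdges (a :: zs i)) ≤ ∑ i, 2 * cost (d i) (T' i) :=
          Finset.sum_le_sum hle
      _ = 2 * ∑ i, cost (d i) (T' i) := by rw [Finset.mul_sum]
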